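/- Let A ∈ ℂ^{m×n} and let B ∈ ℂ^{m×m} be Hermitian, and set M = [B A; A* 0], an (m+n)×(m+n) Hermitian block matrix. The following are equivalent: (i) there exists X ∈ ℂ^{n×m} such that AX + (AX)* ≻ B; (ii) E_A B E_A ⪯ 0 and ℛ(E_A B E_A) = ℛ(E_A); (iii) i₋(M) = m. -/

import Mathlib

/-!
Write `E = E_A`, whose range is `ker Aᴴ`, and `q(u, y)` for the quadratic form of `M`. All three
conditions are equivalent to `B` being negative definite on `ℛ(E)`.

If `D = AX + (AX)ᴴ - B ≻ 0`, then `q(u, -Xu) = -u* D u`, so `q` is negative definite on an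
`m`-dimensional subspace, while it vanishes on the `n`-dimensional subspace `{(0, y)}`; comparing
with the spans of the eigenvectors of `M` of negative and of nonnegative eigenvalue gives
`i₋(M) = m`. If `i₋(M) = m` and some nonzero `v ∈ ker Aᴴ` had `v* B v ≥ 0`, then `q` would be
nonnegative on the `(n + 1)`-dimensional subspace `ℂ (v, 0) ⊕ {(0, y)}`, forcing `i₋(M) < m`.
Negative definiteness on `ℛ(E)` amounts to `-EBE ⪰ 0` with `ker (EBE) = ker E`, and by rank-nullity
the latter is `ℛ(EBE) = ℛ(E)`. Finally, since `ℛ(1 - E) = ℛ(A)` one can solve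
`AX = ½ (1 - E)(1 + B(1 + E))`, and expanding `B = (1 - E + E) B (1 - E + E)` shows
`AX + (AX)ᴴ - B = (1 - E) - EBE`, which is positive definite.
-/

open Matrix ComplexOrder

/-- The matrix of the orthogonal projection of `ℂ^m` onto the subspace `U`. -/
noncomputable def projMat {m : ℕ} (U : Submodule ℂ (EuclideanSpace ℂ (Fin m))) :
    Matrix (Fin m) (Fin m) ℂ :=
  Matrix.toEuclideanLin.symm (U.subtype ∘ₗ (U.orthogonalProjectionOnto).toLinearMap)

/-- `E_A`: orthogonal projection onto the orthogonal complement of the column space of `A`. -/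
noncomputable def eProj {m p : ℕ} (A : Matrix (Fin m) (Fin p) ℂ) : Matrix (Fin m) (Fin m) ℂ :=
  projMat (LinearMap.range (Matrix.toEuclideanLin A))ᗮ

/-- `F_B`: orthogonal projection onto the kernel of `B`. -/
noncomputable def fProj {q m : ℕ} (B : Matrix (Fin q) (Fin m) ℂ) : Matrix (Fin m) (Fin m) ℂ :=
  projMat (LinearMap.ker (Matrix.toEuclideanLin B))

/-- `i₊`: the number of positive eigenvalues of a Hermitian matrix, with multiplicity. -/
noncomputable def iPos {ι : Type} [Fintype ι] [DecidableEq ι] (A : Matrix ι ι ℂ) : ℕ :=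
  if h : A.IsHermitian then Nat.card {i : ι // 0 < h.eigenvalues i} else 0

/-- `i₋`: the number of negative eigenvalues of a Hermitian matrix, with multiplicity. -/
noncomputable def iNeg {ι : Type} [Fintype ι] [DecidableEq ι] (A : Matrix ι ι ℂ) : ℕ :=
  if h : A.IsHermitian then Nat.card {i : ι // h.eigenvalues i < 0} else 0

section Inertia

variable {ι : Type} [Fintype ι] [DecidableEq ι] {A : Matrix ι ι ℂ}

namespace Matrix.IsHermitian

noncomputable def eigenCoords (hA : A.IsHermitian) : (ι → ℂ) →ₗ[ℂ] ι → ℂ :=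
  (hA.eigenvectorUnitary : Matrix ι ι ℂ)ᴴ.mulVecLin

lemma eigenCoords_injective (hA : A.IsHermitian) : Function.Injective hA.eigenCoords := by
  refine (injective_iff_map_eq_zero _).2 fun x hx => ?_
  rw [← one_mulVec x, ← Unitary.coe_mul_star_self hA.eigenvectorUnitary, ← mulVec_mulVec,
    Unitary.coe_star, star_eq_conjTranspose]
  exact (congrArg _ hx).trans (mulVec_zero _)

lemma star_dotProduct_mulVec_eq_sum (hA : A.IsHermitian) (x : ι → ℂ) :
    star x ⬝ᵥ (A *ᵥ x) = ((∑ i, hA.eigenvalues i * ‖hA.eigenCoords x i‖ ^ 2 : ℝ) : ℂ) := by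
  have hstar : star x ᵥ* hA.eigenvectorUnitary = star (hA.eigenCoords x) := by
    rw [eigenCoords, mulVecLin_apply, star_mulVec, conjTranspose_conjTranspose]
  conv_lhs => rw [hA.spectral_theorem, Unitary.conjStarAlgAut_apply, ← mulVec_mulVec,
    ← mulVec_mulVec, dotProduct_mulVec, hstar, star_eq_conjTranspose]
  simp only [dotProduct, mulVec_diagonal, Function.comp_apply, Pi.star_apply,
    RCLike.ofReal_eq_complex_ofReal, Complex.ofReal_sum, Complex.ofReal_mul, Complex.ofReal_pow,
    ← Complex.mul_conj']
  exact Finset.sum_congr rfl fun i _ => by rw [RCLike.star_def, eigenCoords, mulVecLin_apply]; ring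

lemma star_dotProduct_mulVec_nonneg_of_eigenCoords (hA : A.IsHermitian) {x : ι → ℂ}
    (hx : ∀ i, hA.eigenvalues i < 0 → hA.eigenCoords x i = 0) : 0 ≤ star x ⬝ᵥ (A *ᵥ x) := by
  rw [hA.star_dotProduct_mulVec_eq_sum, Complex.zero_le_real]
  refine Finset.sum_nonneg fun i _ => ?_
  by_cases hi : hA.eigenvalues i < 0
  · simp [hx i hi]
  · exact mul_nonneg (not_lt.1 hi) (sq_nonneg _)

lemma star_dotProduct_mulVec_neg_of_eigenCoords (hA : A.IsHermitian) {x : ι → ℂ} (hx0 : x ≠ 0)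
    (hx : ∀ i, ¬ hA.eigenvalues i < 0 → hA.eigenCoords x i = 0) : star x ⬝ᵥ (A *ᵥ x) < 0 := by
  obtain ⟨j, hj⟩ := Function.ne_iff.1 fun h =>
    hx0 (hA.eigenCoords_injective (h.trans (map_zero _).symm))
  have hj_neg : hA.eigenvalues j < 0 := by
    by_contra hj_nonneg
    exact hj (hx j hj_nonneg)
  rw [hA.star_dotProduct_mulVec_eq_sum, ← Complex.ofReal_zero, Complex.real_lt_real]
  refine Finset.sum_neg' (fun i _ => ?_) ⟨j, Finset.mem_univ j,
    mul_neg_of_neg_of_pos hj_neg (by positivity)⟩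
  by_cases hi : hA.eigenvalues i < 0
  · exact mul_nonpos_of_nonpos_of_nonneg hi.le (sq_nonneg _)
  · simp [hx i hi]

end Matrix.IsHermitian

lemma iNeg_eq_card (hA : A.IsHermitian) : iNeg A = Fintype.card {i // hA.eigenvalues i < 0} := by
  rw [iNeg, dif_pos hA, Nat.card_eq_fintype_card]

variable {W : Type*} [AddCommGroup W] [Module ℂ W]

lemma finrank_le_iNeg (hA : A.IsHermitian) (f : W →ₗ[ℂ] ι → ℂ)
    (hf : ∀ w ≠ 0, star (f w) ⬝ᵥ (A *ᵥ f w) < 0) : Module.finrank ℂ W ≤ iNeg A := by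
  let c := LinearMap.funLeft ℂ ℂ (Subtype.val : {i // hA.eigenvalues i < 0} → ι) ∘ₗ
    hA.eigenCoords ∘ₗ f
  have hc : Function.Injective c := by
    refine (injective_iff_map_eq_zero c).2 fun w hw => ?_
    by_contra hw0
    exact (hf w hw0).not_ge
      (hA.star_dotProduct_mulVec_nonneg_of_eigenCoords fun i hi => congrFun hw ⟨i, hi⟩)
  simpa [iNeg_eq_card hA] using LinearMap.finrank_le_finrank_of_injective hc

lemma iNeg_add_finrank_le (hA : A.IsHermitian) (f : W →ₗ[ℂ] ι → ℂ) (hf_inj : Function.Injective f)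
    (hf : ∀ w, 0 ≤ star (f w) ⬝ᵥ (A *ᵥ f w)) : iNeg A + Module.finrank ℂ W ≤ Fintype.card ι := by
  let c := LinearMap.funLeft ℂ ℂ (Subtype.val : {i // ¬ hA.eigenvalues i < 0} → ι) ∘ₗ
    hA.eigenCoords ∘ₗ f
  have hc : Function.Injective c := by
    refine (injective_iff_map_eq_zero c).2 fun w hw => ?_
    by_contra hw0
    have hfw0 : f w ≠ 0 := fun h => hw0 (hf_inj (h.trans (map_zero f).symm))
    exact (hf w).not_gt
      (hA.star_dotProduct_mulVec_neg_of_eigenCoords hfw0 fun i hi => congrFun hw ⟨i, hi⟩)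
  have hW := LinearMap.finrank_le_finrank_of_injective hc
  rw [Module.finrank_fintype_fun_eq_card, Fintype.card_subtype_compl] at hW
  have hle : Fintype.card {i // hA.eigenvalues i < 0} ≤ Fintype.card ι := Fintype.card_subtype_le _
  rw [iNeg_eq_card hA]
  omega

end Inertia

section Blocks

variable {ι κ : Type} [Fintype ι] [Fintype κ] (A : Matrix ι κ ℂ) {B : Matrix ι ι ℂ}

lemma star_sumElim_dotProduct_fromBlocks_mulVec (B : Matrix ι ι ℂ) (u : ι → ℂ) (v : κ → ℂ) :
    star (Sum.elim u v) ⬝ᵥ (fromBlocks B A Aᴴ 0 *ᵥ Sum.elim u v)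
      = star u ⬝ᵥ (B *ᵥ u) + star u ⬝ᵥ (A *ᵥ v) + star v ⬝ᵥ (Aᴴ *ᵥ u) := by
  rw [fromBlocks_mulVec, Function.star_sumElim, sumElim_dotProduct_sumElim]
  simp [dotProduct_add, add_assoc]

variable [DecidableEq ι] [DecidableEq κ]

lemma iNeg_fromBlocks_le (hB : B.IsHermitian) :
    iNeg (fromBlocks B A Aᴴ 0) ≤ Fintype.card ι := by
  let S := (LinearEquiv.sumArrowLequivProdArrow ι κ ℂ ℂ).symm
  have h := iNeg_add_finrank_le (hB.fromBlocks rfl isHermitian_zero)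
    (S.toLinearMap ∘ₗ LinearMap.inr ℂ (ι → ℂ) (κ → ℂ)) (S.injective.comp LinearMap.inr_injective)
    fun y => by
      change 0 ≤ star (Sum.elim 0 y) ⬝ᵥ (fromBlocks B A Aᴴ 0 *ᵥ Sum.elim 0 y)
      simp [star_sumElim_dotProduct_fromBlocks_mulVec]
  rw [Module.finrank_fintype_fun_eq_card, Fintype.card_sum] at h
  omega

lemma card_le_iNeg_fromBlocks (hB : B.IsHermitian) {X : Matrix κ ι ℂ}
    (hX : (A * X + (A * X)ᴴ - B).PosDef) :
    Fintype.card ι ≤ iNeg (fromBlocks B A Aᴴ 0) := by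
  let S := (LinearEquiv.sumArrowLequivProdArrow ι κ ℂ ℂ).symm
  have h := finrank_le_iNeg (hB.fromBlocks rfl isHermitian_zero)
    (S.toLinearMap ∘ₗ LinearMap.id.prod (-X.mulVecLin)) fun u hu => by
      change star (Sum.elim u (-(X *ᵥ u))) ⬝ᵥ (fromBlocks B A Aᴴ 0 *ᵥ Sum.elim u (-(X *ᵥ u))) < 0
      have hXu : star (X *ᵥ u) ⬝ᵥ (Aᴴ *ᵥ u) = star u ⬝ᵥ ((A * X)ᴴ *ᵥ u) := by
        rw [star_mulVec, dotProduct_mulVec, vecMul_vecMul, ← conjTranspose_mul,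
          ← dotProduct_mulVec]
      have hpos := hX.dotProduct_mulVec_pos hu
      rw [sub_mulVec, add_mulVec, dotProduct_sub, dotProduct_add] at hpos
      rw [star_sumElim_dotProduct_fromBlocks_mulVec, mulVec_neg, star_neg, neg_dotProduct,
        dotProduct_neg, hXu, mulVec_mulVec]
      linear_combination hpos
  rwa [Module.finrank_fintype_fun_eq_card] at h

lemma star_dotProduct_mulVec_neg_of_iNeg_fromBlocks (hB : B.IsHermitian)
    (h : iNeg (fromBlocks B A Aᴴ 0) = Fintype.card ι) {v : ι → ℂ} (hv : v ≠ 0)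
    (hAv : Aᴴ *ᵥ v = 0) : star v ⬝ᵥ (B *ᵥ v) < 0 := by
  rw [hB.star_dotProduct_mulVec_eq_sum, ← Complex.ofReal_zero, Complex.real_lt_real]
  by_contra hBv
  rw [not_lt, ← Complex.zero_le_real, ← hB.star_dotProduct_mulVec_eq_sum] at hBv
  have hvA : star v ᵥ* A = 0 := by
    rw [← conjTranspose_conjTranspose A, ← star_mulVec, hAv, star_zero]
  let S := (LinearEquiv.sumArrowLequivProdArrow ι κ ℂ ℂ).symm
  have hle := iNeg_add_finrank_le (hB.fromBlocks rfl isHermitian_zero)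
    (S.toLinearMap ∘ₗ (LinearMap.toSpanSingleton ℂ _ v).prodMap LinearMap.id)
    (S.injective.comp ((smul_left_injective ℂ hv).prodMap Function.injective_id)) fun ⟨α, y⟩ => by
      change 0 ≤ star (Sum.elim (α • v) y) ⬝ᵥ (fromBlocks B A Aᴴ 0 *ᵥ Sum.elim (α • v) y)
      have hdiag : star (α • v) ⬝ᵥ (B *ᵥ (α • v)) = star α * α * (star v ⬝ᵥ (B *ᵥ v)) := by
        rw [star_smul, mulVec_smul, smul_dotProduct, dotProduct_smul, smul_smul, smul_eq_mul]
      have hcross : star (α • v) ⬝ᵥ (A *ᵥ y) = 0 := by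
        rw [dotProduct_mulVec, star_smul, smul_vecMul, hvA, smul_zero, zero_dotProduct]
      rw [star_sumElim_dotProduct_fromBlocks_mulVec, hdiag, hcross, mulVec_smul, hAv, smul_zero,
        dotProduct_zero, add_zero, add_zero]
      exact mul_nonneg (star_mul_self_nonneg α) hBv
  rw [Module.finrank_prod, Module.finrank_self, Module.finrank_fintype_fun_eq_card,
    Fintype.card_sum, h] at hle
  omega

end Blocks

lemma LinearMap.range_eq_of_range_le_of_ker_eq {K V W : Type*} [Field K] [AddCommGroup V]
    [Module K V] [FiniteDimensional K V] [AddCommGroup W] [Module K W] {f g : V →ₗ[K] W}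
    (hle : range f ≤ range g) (hker : ker f = ker g) : range f = range g := by
  refine Submodule.eq_of_le_of_finrank_eq hle ?_
  have hf := finrank_range_add_finrank_ker f
  have hg := finrank_range_add_finrank_ker g
  rw [hker] at hf
  omega

section Compression

variable {ι : Type} [Fintype ι] {B E : Matrix ι ι ℂ}

lemma star_dotProduct_conjTranspose_mul_mul_mulVec (B E : Matrix ι ι ℂ) (x : ι → ℂ) :
    star x ⬝ᵥ ((Eᴴ * B * E) *ᵥ x) = star (E *ᵥ x) ⬝ᵥ (B *ᵥ (E *ᵥ x)) := by
  rw [← mulVec_mulVec, ← mulVec_mulVec, dotProduct_mulVec, star_mulVec]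

namespace IsStarProjection

variable (hE : IsStarProjection E)
include hE

lemma isHermitian : E.IsHermitian :=
  hE.isSelfAdjoint

lemma mulVec_mulVec_self (x : ι → ℂ) : E *ᵥ (E *ᵥ x) = E *ᵥ x := by
  rw [mulVec_mulVec, hE.isIdempotentElem.eq]

lemma star_dotProduct_mul_mul_mulVec (B : Matrix ι ι ℂ) (x : ι → ℂ) :
    star x ⬝ᵥ ((E * B * E) *ᵥ x) = star (E *ᵥ x) ⬝ᵥ (B *ᵥ (E *ᵥ x)) := by
  simpa only [hE.isHermitian.eq] using star_dotProduct_conjTranspose_mul_mul_mulVec B E x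

lemma isHermitian_mul_mul (hB : B.IsHermitian) : (E * B * E).IsHermitian := by
  simpa only [hE.isHermitian.eq] using isHermitian_conjTranspose_mul_mul E hB

lemma star_dotProduct_mulVec [DecidableEq ι] (x : ι → ℂ) :
    star x ⬝ᵥ (E *ᵥ x) = star (E *ᵥ x) ⬝ᵥ (E *ᵥ x) := by
  simpa [hE.isIdempotentElem.eq] using hE.star_dotProduct_mul_mul_mulVec 1 x

end IsStarProjection

lemma forall_star_dotProduct_mulVec_neg_iff (hB : B.IsHermitian) (hE : IsStarProjection E) :
    (∀ v ≠ 0, E *ᵥ v = v → star v ⬝ᵥ (B *ᵥ v) < 0) ↔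
      (-(E * B * E)).PosSemidef ∧
        LinearMap.range (E * B * E).mulVecLin = LinearMap.range E.mulVecLin := by
  have hEBE := hE.star_dotProduct_mul_mul_mulVec B
  constructor
  · intro hneg
    have hker : LinearMap.ker (E * B * E).mulVecLin = LinearMap.ker E.mulVecLin := by
      ext x
      simp only [LinearMap.mem_ker, mulVecLin_apply]
      refine ⟨fun hx => ?_, fun hx => by rw [← mulVec_mulVec, hx, mulVec_zero]⟩
      by_contra hEx
      have := hneg _ hEx (hE.mulVec_mulVec_self x)
      rw [← hEBE, hx, dotProduct_zero] at this
      exact this.false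
    refine ⟨.of_dotProduct_mulVec_nonneg (hE.isHermitian_mul_mul hB).neg fun x => ?_, ?_⟩
    · rw [neg_mulVec, dotProduct_neg, neg_nonneg, hEBE]
      rcases eq_or_ne (E *ᵥ x) 0 with hx | hx
      · rw [hx, mulVec_zero, dotProduct_zero]
      · exact (hneg _ hx (hE.mulVec_mulVec_self x)).le
    · refine LinearMap.range_eq_of_range_le_of_ker_eq ?_ hker
      rintro _ ⟨x, rfl⟩
      exact ⟨(B * E) *ᵥ x, by simp [Matrix.mul_assoc]⟩
  · rintro ⟨hpsd, hrange⟩ v hv hEv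
    have hvBv : star v ⬝ᵥ (B *ᵥ v) = star v ⬝ᵥ ((E * B * E) *ᵥ v) := by rw [hEBE, hEv]
    have hle : star v ⬝ᵥ (B *ᵥ v) ≤ 0 := by
      simpa [hvBv, neg_mulVec] using hpsd.dotProduct_mulVec_nonneg v
    refine hle.lt_of_ne fun h0 => hv ?_
    have hker : (E * B * E) *ᵥ v = 0 := by
      simpa [neg_mulVec] using
        (hpsd.dotProduct_mulVec_zero_iff v).1 (by simp [neg_mulVec, ← hvBv, h0])
    obtain ⟨w, hw⟩ : v ∈ LinearMap.range (E * B * E).mulVecLin := hrange ▸ ⟨v, hEv⟩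
    rw [mulVecLin_apply] at hw
    rw [← dotProduct_star_self_eq_zero]
    calc star v ⬝ᵥ v = star v ⬝ᵥ ((E * B * E) *ᵥ w) := by rw [hw]
      _ = star ((E * B * E) *ᵥ v) ⬝ᵥ w := by
        rw [dotProduct_mulVec, star_mulVec, (hE.isHermitian_mul_mul hB).eq]
      _ = 0 := by rw [hker, star_zero, zero_dotProduct]

lemma posDef_one_sub_sub_mul_mul [DecidableEq ι] (hB : B.IsHermitian) (hE : IsStarProjection E)
    (hneg : ∀ v ≠ 0, E *ᵥ v = v → star v ⬝ᵥ (B *ᵥ v) < 0) :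
    (1 - E - E * B * E).PosDef := by
  have hP := hE.one_sub
  refine .of_dotProduct_mulVec_pos (hP.isHermitian.sub (hE.isHermitian_mul_mul hB))
    fun x hx => ?_
  rw [sub_mulVec, dotProduct_sub, hP.star_dotProduct_mulVec, hE.star_dotProduct_mul_mul_mulVec]
  rcases eq_or_ne (E *ᵥ x) 0 with hEx | hEx
  · have hPx : (1 - E) *ᵥ x = x := by rw [sub_mulVec, one_mulVec, hEx, sub_zero]
    rw [hPx, hEx, mulVec_zero, dotProduct_zero, sub_zero]
    exact dotProduct_star_self_pos_iff.2 hx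
  · exact sub_pos.2 ((hneg _ hEx (hE.mulVec_mulVec_self x)).trans_le
      (dotProduct_star_self_nonneg _))

end Compression

lemma Matrix.exists_mul_eq_of_forall_exists_mulVec_eq {ι κ μ R : Type*} [Fintype κ] [Fintype μ]
    [DecidableEq μ] [NonAssocSemiring R] {A : Matrix ι κ R} {C : Matrix ι μ R}
    (h : ∀ v, ∃ x, A *ᵥ x = C *ᵥ v) : ∃ X, A * X = C := by
  choose x hx using fun j => h (Pi.single j 1)
  refine ⟨(Matrix.of x)ᵀ, ext fun i j => ?_⟩
  have hij := congrFun (hx j) i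
  rw [mulVec_single_one, col_apply] at hij
  exact hij

section Projection

variable {m p : ℕ}

lemma projMat_mulVec (U : Submodule ℂ (EuclideanSpace ℂ (Fin m))) (v : Fin m → ℂ) :
    projMat U *ᵥ v = (U.starProjection (WithLp.toLp 2 v)).ofLp := by
  change (Matrix.toEuclideanLin (projMat U) (WithLp.toLp 2 v)).ofLp = _
  rw [projMat, LinearEquiv.apply_symm_apply]
  rfl

lemma toEuclideanCLM_projMat (U : Submodule ℂ (EuclideanSpace ℂ (Fin m))) :
    Matrix.toEuclideanCLM (n := Fin m) (𝕜 := ℂ) (projMat U) = U.starProjection := by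
  ext x : 1
  exact congrArg (WithLp.toLp 2) (projMat_mulVec U x.ofLp)

lemma isStarProjection_projMat (U : Submodule ℂ (EuclideanSpace ℂ (Fin m))) :
    IsStarProjection (projMat U) := by
  have h := (isStarProjection_starProjection (U := U)).map
    (Matrix.toEuclideanCLM (n := Fin m) (𝕜 := ℂ)).symm.toStarAlgHom
  rw [← toEuclideanCLM_projMat] at h
  simpa using h

lemma isStarProjection_eProj (A : Matrix (Fin m) (Fin p) ℂ) : IsStarProjection (eProj A) :=
  isStarProjection_projMat _

lemma eProj_mul (A : Matrix (Fin m) (Fin p) ℂ) : eProj A * A = 0 := by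
  refine Matrix.ext_of_mulVec_single fun i => ?_
  have hmem : WithLp.toLp 2 (A *ᵥ Pi.single i 1) ∈ LinearMap.range (Matrix.toEuclideanLin A) :=
    LinearMap.mem_range_self _ (WithLp.toLp 2 (Pi.single i 1))
  rw [← mulVec_mulVec, eProj, projMat_mulVec, (Submodule.starProjection_apply_eq_zero_iff _).2
    (Submodule.le_orthogonal_orthogonal _ hmem), WithLp.ofLp_zero, zero_mulVec]

lemma conjTranspose_mul_eProj (A : Matrix (Fin m) (Fin p) ℂ) : Aᴴ * eProj A = 0 := by
  rw [← (isStarProjection_eProj A).isHermitian.eq, ← conjTranspose_mul, eProj_mul,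
    conjTranspose_zero]

lemma exists_mulVec_eq_sub_eProj_mulVec (A : Matrix (Fin m) (Fin p) ℂ) (v : Fin m → ℂ) :
    ∃ x, A *ᵥ x = v - eProj A *ᵥ v := by
  have hv := Submodule.sub_starProjection_mem_orthogonal
    (K := (LinearMap.range (Matrix.toEuclideanLin A))ᗮ) (WithLp.toLp 2 v)
  rw [Submodule.orthogonal_orthogonal] at hv
  obtain ⟨x, hx⟩ := hv
  refine ⟨x.ofLp, ?_⟩
  rw [eProj, projMat_mulVec]
  exact congrArg WithLp.ofLp hx

end Projection

lemma exists_posDef_of_forall_star_dotProduct_mulVec_neg {m n : ℕ} (A : Matrix (Fin m) (Fin n) ℂ)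
    {B : Matrix (Fin m) (Fin m) ℂ} (hB : B.IsHermitian)
    (hneg : ∀ v ≠ 0, eProj A *ᵥ v = v → star v ⬝ᵥ (B *ᵥ v) < 0) :
    ∃ X : Matrix (Fin n) (Fin m) ℂ, (A * X + (A * X)ᴴ - B).PosDef := by
  set E := eProj A
  have hE : IsStarProjection E := isStarProjection_eProj A
  set K : Matrix (Fin m) (Fin m) ℂ := (2⁻¹ : ℂ) • (1 + B * (1 + E))
  obtain ⟨X, hX⟩ : ∃ X : Matrix (Fin n) (Fin m) ℂ, A * X = (1 - E) * K :=
    exists_mul_eq_of_forall_exists_mulVec_eq fun v => by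
      obtain ⟨x, hx⟩ := exists_mulVec_eq_sub_eProj_mulVec A (K *ᵥ v)
      exact ⟨x, by rw [hx, ← mulVec_mulVec, sub_mulVec, one_mulVec]⟩
  have hsum : A * X + (A * X)ᴴ - B = 1 - E - E * B * E := by
    simp only [hX, K, conjTranspose_mul, conjTranspose_smul, conjTranspose_add, conjTranspose_sub,
      conjTranspose_one, hB.eq, hE.isHermitian.eq, star_inv₀, star_ofNat, mul_add, sub_mul,
      mul_one, one_mul, mul_smul_comm, Matrix.mul_assoc]
    module
  exact ⟨X, hsum ▸ posDef_one_sub_sub_mul_mul hB hE hneg⟩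

theorem stmt13 {m n : ℕ} (A : Matrix (Fin m) (Fin n) ℂ)
    (B : Matrix (Fin m) (Fin m) ℂ) (hB : B.IsHermitian)
    (M : Matrix (Fin m ⊕ Fin n) (Fin m ⊕ Fin n) ℂ)
    (hM : M = Matrix.fromBlocks B A Aᴴ 0) :
    ((∃ X : Matrix (Fin n) (Fin m) ℂ, (A * X + (A * X)ᴴ - B).PosDef) ↔
        (-(eProj A * B * eProj A)).PosSemidef ∧
          LinearMap.range (eProj A * B * eProj A).mulVecLin
            = LinearMap.range (eProj A).mulVecLin) ∧
      ((∃ X : Matrix (Fin n) (Fin m) ℂ, (A * X + (A * X)ᴴ - B).PosDef) ↔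
        iNeg M = m) := by
  subst hM
  have hsolvable_iNeg : (∃ X : Matrix (Fin n) (Fin m) ℂ, (A * X + (A * X)ᴴ - B).PosDef) →
      iNeg (fromBlocks B A Aᴴ 0) = m := fun ⟨X, hX⟩ =>
    le_antisymm (by simpa using iNeg_fromBlocks_le A hB)
      (by simpa using card_le_iNeg_fromBlocks A hB hX)
  have hiNeg_neg (h : iNeg (fromBlocks B A Aᴴ 0) = m) (v : Fin m → ℂ) (hv : v ≠ 0)
      (hEv : eProj A *ᵥ v = v) : star v ⬝ᵥ (B *ᵥ v) < 0 :=
    star_dotProduct_mulVec_neg_of_iNeg_fromBlocks A hB (by simpa using h) hv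
      (by rw [← hEv, mulVec_mulVec, conjTranspose_mul_eProj, zero_mulVec])
  have hneg_iff := forall_star_dotProduct_mulVec_neg_iff hB (isStarProjection_eProj A)
  have hneg_solvable := exists_posDef_of_forall_star_dotProduct_mulVec_neg A hB
  exact ⟨⟨fun h => hneg_iff.1 (hiNeg_neg (hsolvable_iNeg h)),
      fun h => hneg_solvable (hneg_iff.2 h)⟩,
    ⟨hsolvable_iNeg, fun h => hneg_solvable (hiNeg_neg h)⟩⟩
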